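/- Let σ be a magnetic form on 𝕋^{2N} and ε > 0 a constant such that for every smooth loop γ : ℝ → ℝ^{2N} with γ(t+τ) − γ(t) a constant vector in ℤ^{2N} and every v ∈ ℝ^{2N} one has |(F_σ^γ(τ) − Id)·v| ≥ ε·|v| (quantitative non-resonance). Let V be a potential and set ‖∇V‖_∞ = sup_{t,x} |∇V_t(x)|. Let δ ≥ 0, let γ : ℝ → ℝ^{2N} be smooth with γ(t+τ) − γ(t) a constant vector in ℤ^{2N}, and let p : ℝ → ℝ^{2N} be smooth and τ-periodic, and assume that ∫₀^τ |γ'(t) − p(t)|² dt + ∫₀^τ |p'(t) + Y_σ(γ(t))·p(t) + ∇V_t(γ(t))|² dt ≤ δ². Then sup_{t∈ℝ} |p(t)| ≤ (√τ + √(2τ)/ε)·(δ + √τ·‖∇V‖_∞). -/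

import Mathlib

open Real Filter

noncomputable section

/-- Configuration space ℝ^{2N}: coordinate `(j, s)` is the `s`-th coordinate of the
`j`-th particle, with the Euclidean norm. -/
abbrev Conf (N : ℕ) := EuclideanSpace ℝ (Fin N × Fin 2)

/-- The plane ℝ² with the Euclidean norm. -/
abbrev Plane := EuclideanSpace ℝ (Fin 2)

/-- The coordinates of the `j`-th particle. -/
def part {N : ℕ} (x : Conf N) (j : Fin N) : Plane := WithLp.toLp 2 (fun s => x (j, s))

/-- The lattice vector in ℝ^{2N} associated to `m ∈ ℤ^{2N}`. -/
def latVec {N : ℕ} (m : Fin N × Fin 2 → ℤ) : Conf N := WithLp.toLp 2 (fun i => (m i : ℝ))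

/-- The lattice vector in ℝ² associated to `m ∈ ℤ²`. -/
def latVec2 (m : Fin 2 → ℤ) : Plane := WithLp.toLp 2 (fun s => (m s : ℝ))

/-- A product magnetic form on 𝕋^{2N}, encoded by smooth ℤ²-periodic functions
`a j : ℝ² → ℝ`. -/
structure Magnetic (N : ℕ) where
  a : Fin N → Plane → ℝ
  smooth : ∀ j, ContDiff ℝ (⊤ : ℕ∞) (a j)
  periodic : ∀ j (x : Plane) (m : Fin 2 → ℤ), a j (x + latVec2 m) = a j x

/-- `σ` is non-resonant in period `τ`. -/
def Magnetic.NonResonant {N : ℕ} (σ : Magnetic N) (τ : ℝ) : Prop :=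
  ∀ j : Fin N, ∃ k : ℤ, ∀ x : Plane,
    2 * π * k / τ < σ.a j x ∧ σ.a j x < 2 * π * (k + 1) / τ

/-- The Lorentz force `Y_σ(x)·v`: block-diagonal action, the `j`-th 2×2 block being
`a_j(x_j)·J₀` with `J₀ = [[0,-1],[1,0]]`. -/
def lorentz {N : ℕ} (a : Fin N → Plane → ℝ) (x v : Conf N) : Conf N :=
  WithLp.toLp 2 (fun i : Fin N × Fin 2 => if i.2 = (0 : Fin 2) then -(a i.1 (part x i.1)) * v (i.1, 1)
           else (a i.1 (part x i.1)) * v (i.1, 0))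

/-- A potential: smooth, τ-periodic in time and ℤ^{2N}-periodic in space. -/
structure Potential (N : ℕ) (τ : ℝ) where
  V : ℝ → Conf N → ℝ
  smooth : ContDiff ℝ (⊤ : ℕ∞) (Function.uncurry V)
  periodic_t : ∀ t x, V (t + τ) x = V t x
  periodic_x : ∀ t (x : Conf N) (m : Fin N × Fin 2 → ℤ), V t (x + latVec m) = V t x

/-- A τ-periodic solution in class `h ∈ ℤ^{2N}` of
`γ'' = −Y_σ(γ)·γ' − ∇V_t(γ)`. -/
def IsSolution {N : ℕ} (σ : Magnetic N) {τ : ℝ} (P : Potential N τ)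
    (h : Fin N × Fin 2 → ℤ) (γ : ℝ → Conf N) : Prop :=
  ContDiff ℝ (⊤ : ℕ∞) γ ∧
  (∀ t, deriv (deriv γ) t =
    - lorentz σ.a (γ t) (deriv γ t) - gradient (P.V t) (γ t)) ∧
  (∀ t, γ (t + τ) = γ t + latVec h) ∧
  (∀ t, deriv γ (t + τ) = deriv γ t)

/-- Two solutions are identified iff they differ by a lattice translation. -/
def SameSol {N : ℕ} (γ₁ γ₂ : ℝ → Conf N) : Prop :=
  ∃ m : Fin N × Fin 2 → ℤ, ∀ t, γ₁ t = γ₂ t + latVec m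

/-- Non-degeneracy of a τ-periodic solution: the only τ-periodic solution of the
linearized equation is `ξ ≡ 0`. -/
def NonDegenerate {N : ℕ} (σ : Magnetic N) {τ : ℝ} (P : Potential N τ)
    (γ : ℝ → Conf N) : Prop :=
  ∀ ξ : ℝ → Conf N, ContDiff ℝ (⊤ : ℕ∞) ξ →
    (∀ t, deriv (deriv ξ) t =
      - fderiv ℝ (fun x => lorentz σ.a x (deriv γ t)) (γ t) (ξ t)
      - lorentz σ.a (γ t) (deriv ξ t)
      - fderiv ℝ (fun x => gradient (P.V t) x) (γ t) (ξ t)) →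
    ξ τ = ξ 0 → deriv ξ τ = deriv ξ 0 → ∀ t, ξ t = 0
open Matrix

/-- `b_j^γ(t) = ∫₀^t a_j(γ_j(s)) ds`. -/
def bgam {N : ℕ} (σ : Magnetic N) (γ : ℝ → Conf N) (j : Fin N) (t : ℝ) : ℝ :=
  ∫ s in (0:ℝ)..t, σ.a j (part (γ s) j)

/-- The rotation matrix `exp(θ·J₀) = [[cos θ, −sin θ],[sin θ, cos θ]]`. -/
def rotMat (θ : ℝ) : Matrix (Fin 2) (Fin 2) ℝ :=
  !![Real.cos θ, -Real.sin θ; Real.sin θ, Real.cos θ]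

/-- `F_σ^γ(t)`: the block-diagonal matrix whose `j`-th 2×2 block is the rotation
`exp(b_j^γ(t)·J₀)`. -/
def Fsol {N : ℕ} (σ : Magnetic N) (γ : ℝ → Conf N) (t : ℝ) :
    Matrix (Fin N × Fin 2) (Fin N × Fin 2) ℝ :=
  fun i k => if i.1 = k.1 then rotMat (bgam σ γ i.1 t) i.2 k.2 else 0

/-- `(F_σ^γ(τ) − Id)·v`, viewed as a vector of the Euclidean space ℝ^{2N}. -/
def FminusIdMulVec {N : ℕ} (σ : Magnetic N) (γ : ℝ → Conf N) (τ : ℝ) (v : Conf N) : Conf N :=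
  (EuclideanSpace.equiv (Fin N × Fin 2) ℝ).symm
    ((Fsol σ γ τ - 1).mulVec (EuclideanSpace.equiv (Fin N × Fin 2) ℝ v))

/-!
Twist the momentum by the magnetic rotation: `u(t) = F_σ^γ(t) p(t)`. Since `F_σ^γ` is the
fundamental solution of `ξ' = Y_σ(γ) ξ`, one gets `u' = F_σ^γ (p' + Y_σ(γ) p)`, and `F_σ^γ` is
orthogonal, so for `t ∈ [0, τ]`
`|u(t) - u(0)| ≤ ∫₀^τ |p' + Y_σ(γ) p| ≤ √τ δ + τ ‖∇V‖_∞ =: K`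
by the triangle inequality and Cauchy–Schwarz. Periodicity of `p` gives
`u(τ) - u(0) = (F_σ^γ(τ) - Id) p(0)`, so non-resonance yields `ε |p(0)| ≤ K`; hence
`|p(t)| = |u(t)| ≤ K/ε + K` on `[0, τ]`, and everywhere by periodicity.
-/

open InnerProductSpace MeasureTheory Set

lemma EuclideanSpace.hasDerivAt_iff {ι : Type*} [Fintype ι] {f : ℝ → EuclideanSpace ℝ ι}
    {f' : EuclideanSpace ℝ ι} {t : ℝ} :
    HasDerivAt f f' t ↔ ∀ i, HasDerivAt (fun s => f s i) (f' i) t := by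
  refine ⟨fun h i => ((EuclideanSpace.proj i).hasFDerivAt.comp_hasDerivAt t h :), fun h => ?_⟩
  exact ((EuclideanSpace.equiv ι ℝ).symm.hasFDerivAt.comp_hasDerivAt t (hasDerivAt_pi.2 h) :)

lemma norm_sub_le_integral_norm_deriv {E : Type*} [NormedAddCommGroup E] [NormedSpace ℝ E]
    [CompleteSpace E] {u u' : ℝ → E} (hu : ∀ s, HasDerivAt u (u' s) s) (hu' : Continuous u')
    {a b t : ℝ} (ht : t ∈ Icc a b) : ‖u t - u a‖ ≤ ∫ s in a..b, ‖u' s‖ := by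
  rw [← intervalIntegral.integral_eq_sub_of_hasDerivAt (fun s _ => hu s)
    (hu'.intervalIntegrable a t)]
  calc ‖∫ s in a..t, u' s‖ ≤ ∫ s in a..t, ‖u' s‖ :=
        intervalIntegral.norm_integral_le_integral_norm ht.1
    _ ≤ ∫ s in a..b, ‖u' s‖ :=
        intervalIntegral.integral_mono_interval le_rfl ht.1 ht.2
          (ae_of_all _ fun s => norm_nonneg _) (hu'.norm.intervalIntegrable a b)

lemma integral_le_sqrt_mul_of_integral_sq_le {f : ℝ → ℝ} (hf : Continuous f) {T D : ℝ}
    (hT : 0 < T) (hD : 0 ≤ D) (hfD : ∫ s in (0:ℝ)..T, f s ^ 2 ≤ D ^ 2) :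
    ∫ s in (0:ℝ)..T, f s ≤ √T * D := by
  have : NeZero (volume (Ioc 0 T)) := ⟨by simp [hT]⟩
  have jensen : (⨍ s in Ioc 0 T, f s) ^ 2 ≤ ⨍ s in Ioc 0 T, f s ^ 2 :=
    even_two.convexOn_pow.map_average_le (continuousOn_pow 2) isClosed_univ (by simp)
      (hf.integrableOn_Icc.mono_set Ioc_subset_Icc_self)
      ((hf.pow 2).integrableOn_Icc.mono_set Ioc_subset_Icc_self)
  simp only [setAverage_eq, Real.volume_real_Ioc_of_le hT.le,
    ← intervalIntegral.integral_of_le hT.le, sub_zero, smul_eq_mul, mul_pow] at jensen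
  have hsq : (∫ s in (0:ℝ)..T, f s) ^ 2 ≤ (√T * D) ^ 2 := by
    rw [mul_pow, sq_sqrt hT.le]
    field_simp at jensen
    nlinarith
  exact (abs_le_of_sq_le_sq' hsq (by positivity)).2

section Conf

variable {N : ℕ}

def blockRotation (θ : Fin N → ℝ) (v : Conf N) : Conf N :=
  WithLp.toLp 2 fun i => ∑ k, rotMat (θ i.1) i.2 k * v (i.1, k)

@[simp] lemma blockRotation_apply_zero (θ : Fin N → ℝ) (v : Conf N) (j : Fin N) :
    blockRotation θ v (j, 0) = cos (θ j) * v (j, 0) - sin (θ j) * v (j, 1) := by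
  simp [blockRotation, rotMat, Fin.sum_univ_two]
  ring

@[simp] lemma blockRotation_apply_one (θ : Fin N → ℝ) (v : Conf N) (j : Fin N) :
    blockRotation θ v (j, 1) = sin (θ j) * v (j, 0) + cos (θ j) * v (j, 1) := by
  simp [blockRotation, rotMat, Fin.sum_univ_two]

@[simp] lemma blockRotation_zero (v : Conf N) : blockRotation (fun _ => 0) v = v := by
  ext ⟨j, s⟩
  fin_cases s <;> simp

lemma norm_blockRotation (θ : Fin N → ℝ) (v : Conf N) : ‖blockRotation θ v‖ = ‖v‖ := by
  simp only [EuclideanSpace.norm_eq, Real.norm_eq_abs, sq_abs, Fintype.sum_prod_type,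
    Fin.sum_univ_two, blockRotation_apply_zero, blockRotation_apply_one]
  congr 2 with j
  linear_combination (v (j, 0) ^ 2 + v (j, 1) ^ 2) * sin_sq_add_cos_sq (θ j)

lemma FminusIdMulVec_eq (σ : Magnetic N) (γ : ℝ → Conf N) (τ : ℝ) (v : Conf N) :
    FminusIdMulVec σ γ τ v = blockRotation (fun j => bgam σ γ j τ) v - v := by
  ext ⟨j, s⟩
  simp [FminusIdMulVec, Matrix.sub_mulVec, Matrix.mulVec, dotProduct, Fsol,
    Fintype.sum_prod_type, blockRotation]

@[simp] lemma lorentz_apply_zero (a : Fin N → Plane → ℝ) (x v : Conf N) (j : Fin N) :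
    lorentz a x v (j, 0) = -a j (part x j) * v (j, 1) := rfl

@[simp] lemma lorentz_apply_one (a : Fin N → Plane → ℝ) (x v : Conf N) (j : Fin N) :
    lorentz a x v (j, 1) = a j (part x j) * v (j, 0) := rfl

lemma Continuous.blockRotation {α : Type*} [TopologicalSpace α] {θ : α → Fin N → ℝ}
    {v : α → Conf N} (hθ : Continuous θ) (hv : Continuous v) :
    Continuous fun t => blockRotation (θ t) (v t) := by
  unfold _root_.blockRotation rotMat
  fun_prop

lemma Continuous.lorentz {α : Type*} [TopologicalSpace α] {a : Fin N → Plane → ℝ}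
    (ha : ∀ j, Continuous (a j)) {x v : α → Conf N} (hx : Continuous x) (hv : Continuous v) :
    Continuous fun t => lorentz a (x t) (v t) := by
  refine (PiLp.continuous_toLp 2 _).comp (continuous_pi fun i => ?_)
  unfold part
  split_ifs <;> fun_prop

lemma HasDerivAt.blockRotation {θ : ℝ → Fin N → ℝ} {v : ℝ → Conf N}
    {a : Fin N → Plane → ℝ} {x v' : Conf N} {t : ℝ}
    (hθ : ∀ j, HasDerivAt (fun s => θ s j) (a j (part x j)) t) (hv : HasDerivAt v v' t) :
    HasDerivAt (fun s => blockRotation (θ s) (v s))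
      (blockRotation (θ t) (v' + lorentz a x (v t))) t := by
  have hvi := EuclideanSpace.hasDerivAt_iff.1 hv
  refine EuclideanSpace.hasDerivAt_iff.2 (Prod.forall.2 fun j => Fin.forall_fin_two.2 ⟨?_, ?_⟩)
  · simp only [blockRotation_apply_zero, PiLp.add_apply, lorentz_apply_zero, lorentz_apply_one]
    exact (((hθ j).cos.mul (hvi (j, 0))).sub ((hθ j).sin.mul (hvi (j, 1)))).congr_deriv (by ring)
  · simp only [blockRotation_apply_one, PiLp.add_apply, lorentz_apply_zero, lorentz_apply_one]
    exact (((hθ j).sin.mul (hvi (j, 0))).add ((hθ j).cos.mul (hvi (j, 1)))).congr_deriv (by ring)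

lemma exists_bound_of_periodic {E : Type*} [NormedAddCommGroup E] {τ : ℝ} (hτ : 0 < τ)
    {f : ℝ → Conf N → E} (hf : Continuous (Function.uncurry f)) (hft : Function.Periodic f τ)
    (hfx : ∀ t x m, f t (x + latVec m) = f t x) : ∃ C, ∀ t x, ‖f t x‖ ≤ C := by
  set cube : Set (Conf N) := EuclideanSpace.equiv _ ℝ ⁻¹' univ.pi fun _ => Icc 0 1
  have hcube : IsCompact cube := (EuclideanSpace.equiv _ ℝ).toHomeomorph.isCompact_preimage.2
    (isCompact_univ_pi fun _ => isCompact_Icc)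
  obtain ⟨C, hC⟩ := (isCompact_Icc.prod hcube).exists_bound_of_continuousOn hf.continuousOn
  refine ⟨C, fun t x => ?_⟩
  obtain ⟨t', ht', hft'⟩ := hft.exists_mem_Ico₀ hτ t
  set x' : Conf N := x - latVec fun i => ⌊x i⌋
  have hx' : x = x' + latVec fun i => ⌊x i⌋ := (sub_add_cancel _ _).symm
  have hx'cube : x' ∈ cube := fun i _ =>
    show Int.fract (x i) ∈ Icc 0 1 from ⟨Int.fract_nonneg _, (Int.fract_lt_one _).le⟩
  rw [hft', hx', hfx]
  exact hC (t', x') ⟨Ico_subset_Icc_self ht', hx'cube⟩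

namespace Potential

variable {τ : ℝ} (P : Potential N τ)

lemma periodic : Function.Periodic P.V τ :=
  fun t => funext (P.periodic_t t)

lemma continuous_gradient : Continuous (Function.uncurry fun t => gradient (P.V t)) := by
  have hderiv : ∀ t x, HasFDerivAt (P.V t)
      (fderiv ℝ (Function.uncurry P.V) (t, x) ∘L ContinuousLinearMap.inr ℝ ℝ (Conf N)) x :=
    fun t x => (P.smooth.differentiable (by simp) (t, x)).hasFDerivAt.comp x
      (hasFDerivAt_prodMk_right t x)
  have hcont : Continuous fun z : ℝ × Conf N => (toDual ℝ (Conf N)).symm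
      (fderiv ℝ (Function.uncurry P.V) z ∘L ContinuousLinearMap.inr ℝ ℝ (Conf N)) :=
    (toDual ℝ (Conf N)).symm.continuous.comp
      ((P.smooth.continuous_fderiv (by simp)).clm_comp continuous_const)
  refine hcont.congr fun ⟨t, x⟩ => ?_
  simp only [Function.uncurry_apply_pair, gradient, (hderiv t x).fderiv]

lemma gradient_add_latVec (t : ℝ) (x : Conf N) (m : Fin N × Fin 2 → ℤ) :
    gradient (P.V t) (x + latVec m) = gradient (P.V t) x := by
  unfold gradient
  rw [← fderiv_comp_add_right]
  congr 2
  exact funext fun y => P.periodic_x t y m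

lemma norm_gradient_le_iSup (hτ : 0 < τ) (t : ℝ) (x : Conf N) :
    ‖gradient (P.V t) x‖ ≤ ⨆ s : ℝ, ⨆ y : Conf N, ‖gradient (P.V s) y‖ := by
  obtain ⟨C, hC⟩ := exists_bound_of_periodic hτ P.continuous_gradient
    (P.periodic.comp gradient) P.gradient_add_latVec
  exact le_ciSup₂ (f := fun s y => ‖gradient (P.V s) y‖)
    ⟨C, by simpa [mem_upperBounds] using hC⟩ t x

end Potential

lemma Magnetic.continuous_comp_part (σ : Magnetic N) {γ : ℝ → Conf N} (hγ : Continuous γ)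
    (j : Fin N) : Continuous fun s => σ.a j (part (γ s) j) := by
  have := (σ.smooth j).continuous
  unfold part
  fun_prop

lemma hasDerivAt_bgam (σ : Magnetic N) {γ : ℝ → Conf N} (hγ : Continuous γ) (j : Fin N)
    (t : ℝ) : HasDerivAt (bgam σ γ j) (σ.a j (part (γ t) j)) t :=
  ((σ.continuous_comp_part hγ j).integral_hasStrictDerivAt 0 t).hasDerivAt

lemma continuous_bgam (σ : Magnetic N) {γ : ℝ → Conf N} (hγ : Continuous γ) :
    Continuous fun t j => bgam σ γ j t :=
  continuous_pi fun j => continuous_iff_continuousAt.2 fun t =>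
    (hasDerivAt_bgam σ hγ j t).continuousAt

lemma continuous_deriv_add_lorentz (σ : Magnetic N) {γ p : ℝ → Conf N} (hγ : Continuous γ)
    (hp : ContDiff ℝ 1 p) : Continuous fun s => deriv p s + lorentz σ.a (γ s) (p s) :=
  (hp.continuous_deriv le_rfl).add
    (Continuous.lorentz (fun j => (σ.smooth j).continuous) hγ hp.continuous)

def rotatedMomentum (σ : Magnetic N) (γ p : ℝ → Conf N) (t : ℝ) : Conf N :=
  blockRotation (fun j => bgam σ γ j t) (p t)

section rotatedMomentum

variable (σ : Magnetic N) {γ p : ℝ → Conf N}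

lemma norm_rotatedMomentum (t : ℝ) : ‖rotatedMomentum σ γ p t‖ = ‖p t‖ :=
  norm_blockRotation _ _

lemma rotatedMomentum_zero : rotatedMomentum σ γ p 0 = p 0 := by
  simp [rotatedMomentum, bgam]

lemma rotatedMomentum_sub_zero {τ : ℝ} (hp : p τ = p 0) :
    rotatedMomentum σ γ p τ - rotatedMomentum σ γ p 0 = FminusIdMulVec σ γ τ (p 0) := by
  rw [rotatedMomentum_zero, FminusIdMulVec_eq, rotatedMomentum, hp]

lemma norm_rotatedMomentum_sub_le (hγ : Continuous γ) (hp : ContDiff ℝ 1 p) {t T : ℝ}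
    (ht : t ∈ Icc 0 T) : ‖rotatedMomentum σ γ p t - rotatedMomentum σ γ p 0‖ ≤
      ∫ s in (0:ℝ)..T, ‖deriv p s + lorentz σ.a (γ s) (p s)‖ := by
  have hderiv : ∀ s, HasDerivAt (rotatedMomentum σ γ p)
      (blockRotation (fun j => bgam σ γ j s) (deriv p s + lorentz σ.a (γ s) (p s))) s :=
    fun s => HasDerivAt.blockRotation (fun j => hasDerivAt_bgam σ hγ j s)
      (hp.differentiable one_ne_zero s).hasDerivAt
  simpa only [norm_blockRotation] using norm_sub_le_integral_norm_deriv hderiv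
    ((continuous_bgam σ hγ).blockRotation (continuous_deriv_add_lorentz σ hγ hp)) ht

end rotatedMomentum

lemma integral_norm_deriv_add_lorentz_le {τ : ℝ} (hτ : 0 < τ) (σ : Magnetic N)
    (P : Potential N τ) {γ p : ℝ → Conf N} (hγ : Continuous γ) (hp : ContDiff ℝ 1 p)
    {δ G : ℝ} (hδ : 0 ≤ δ) (hG : ∀ s x, ‖gradient (P.V s) x‖ ≤ G)
    (hres : ∫ s in (0:ℝ)..τ,
      ‖deriv p s + lorentz σ.a (γ s) (p s) + gradient (P.V s) (γ s)‖ ^ 2 ≤ δ ^ 2) :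
    ∫ s in (0:ℝ)..τ, ‖deriv p s + lorentz σ.a (γ s) (p s)‖ ≤ √τ * δ + τ * G := by
  set e := fun s => deriv p s + lorentz σ.a (γ s) (p s) + gradient (P.V s) (γ s)
  have hlor := continuous_deriv_add_lorentz σ hγ hp
  have he : Continuous e := hlor.add (P.continuous_gradient.comp (continuous_id.prodMk hγ))
  calc ∫ s in (0:ℝ)..τ, ‖deriv p s + lorentz σ.a (γ s) (p s)‖
      ≤ ∫ s in (0:ℝ)..τ, (‖e s‖ + G) := by
        refine intervalIntegral.integral_mono_on hτ.le (hlor.norm.intervalIntegrable _ _)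
          ((he.norm.add continuous_const).intervalIntegrable _ _) fun s _ => ?_
        rw [← add_sub_cancel_right (deriv p s + _) (gradient (P.V s) (γ s))]
        exact (norm_sub_le _ _).trans (add_le_add le_rfl (hG s (γ s)))
    _ = (∫ s in (0:ℝ)..τ, ‖e s‖) + τ * G := by
        rw [intervalIntegral.integral_add (he.norm.intervalIntegrable _ _)
          intervalIntegrable_const, intervalIntegral.integral_const, sub_zero, smul_eq_mul]
    _ ≤ √τ * δ + τ * G := by
        gcongr
        exact integral_le_sqrt_mul_of_integral_sq_le he.norm hτ hδ hres

end Conf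

theorem momentum_linfty_bound
    (N : ℕ) (τ : ℝ) (hτ : 0 < τ) (σ : Magnetic N) (ε : ℝ) (hε : 0 < ε)
    (hqnr : ∀ γ : ℝ → Conf N, ContDiff ℝ (⊤ : ℕ∞) γ →
      (∃ h : Fin N × Fin 2 → ℤ, ∀ t, γ (t + τ) = γ t + latVec h) →
      ∀ v : Conf N, ε * ‖v‖ ≤ ‖FminusIdMulVec σ γ τ v‖)
    (P : Potential N τ) (δ : ℝ) (hδ : 0 ≤ δ)
    (γ p : ℝ → Conf N) (hγ : ContDiff ℝ (⊤ : ℕ∞) γ) (hp : ContDiff ℝ (⊤ : ℕ∞) p)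
    (hlat : ∃ h : Fin N × Fin 2 → ℤ, ∀ t, γ (t + τ) = γ t + latVec h)
    (hpper : ∀ t, p (t + τ) = p t)
    (hineq : (∫ t in (0:ℝ)..τ, ‖deriv γ t - p t‖ ^ 2) +
        (∫ t in (0:ℝ)..τ,
          ‖deriv p t + lorentz σ.a (γ t) (p t) + gradient (P.V t) (γ t)‖ ^ 2) ≤ δ ^ 2) :
    ∀ t : ℝ, ‖p t‖ ≤ (Real.sqrt τ + Real.sqrt (2 * τ) / ε) *
      (δ + Real.sqrt τ * (⨆ s : ℝ, ⨆ x : Conf N, ‖gradient (P.V s) x‖)) := by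
  set G := ⨆ s : ℝ, ⨆ x : Conf N, ‖gradient (P.V s) x‖
  have hG : ∀ s x, ‖gradient (P.V s) x‖ ≤ G := P.norm_gradient_le_iSup hτ
  have hG0 : 0 ≤ G := (norm_nonneg _).trans (hG 0 0)
  have hp1 : ContDiff ℝ 1 p := hp.of_le (by exact_mod_cast le_top)
  set K := √τ * (δ + √τ * G)
  set u := rotatedMomentum σ γ p
  have hres := (le_add_of_nonneg_left (intervalIntegral.integral_nonneg hτ.le
    fun t _ => sq_nonneg ‖deriv γ t - p t‖)).trans hineq
  have hu : ∀ t ∈ Icc 0 τ, ‖u t - u 0‖ ≤ K := fun t ht => calc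
    ‖u t - u 0‖ ≤ _ := norm_rotatedMomentum_sub_le σ hγ.continuous hp1 ht
    _ ≤ √τ * δ + τ * G := integral_norm_deriv_add_lorentz_le hτ σ P hγ.continuous
        hp1 hδ hG hres
    _ = K := by simp only [K, mul_add, ← mul_assoc, mul_self_sqrt hτ.le]
  have hp0 : ε * ‖p 0‖ ≤ K := calc
    ε * ‖p 0‖ ≤ ‖FminusIdMulVec σ γ τ (p 0)‖ := hqnr γ hγ hlat (p 0)
    _ = ‖u τ - u 0‖ := by rw [rotatedMomentum_sub_zero σ (by simpa using hpper 0)]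
    _ ≤ K := hu τ ⟨hτ.le, le_rfl⟩
  intro t
  obtain ⟨t', ht', hpt⟩ := Function.Periodic.exists_mem_Ico₀ hpper hτ t
  calc ‖p t‖ = ‖u t'‖ := by rw [hpt, norm_rotatedMomentum]
    _ ≤ ‖u 0‖ + ‖u t' - u 0‖ := norm_le_insert' _ _
    _ ≤ K / ε + K := by
        gcongr
        · rw [show u 0 = p 0 from rotatedMomentum_zero σ, le_div_iff₀ hε]
          linarith
        · exact hu t' (Ico_subset_Icc_self ht')
    _ = (√τ + √τ / ε) * (δ + √τ * G) := by ring
    _ ≤ (√τ + √(2 * τ) / ε) * (δ + √τ * G) := by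
        gcongr
        linarith
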